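/- Two real skew-symmetric n×n matrices with identical characteristic polynomials are conjugate by an orthogonal matrix: if x₁, x₂ ∈ so(n) and det(tI − x₁) = det(tI − x₂), then there exists g ∈ O(n) with g x₁ g⁻¹ = x₂. -/

import Mathlib

/-!
For a real skew-symmetric `x`, the complex matrix `i • x` is Hermitian, and Hermitian matrices with
the same characteristic polynomial are unitarily conjugate; so `U x₁ = x₂ U` for a complex unitary
`U`. Writing `U = R + i Q` with `R`, `Q` real, both `R` and `Q` intertwine `x₁` with `x₂`, hence so
does every `R + t Q`, and `det (R + t Q)` is a real polynomial in `t` that does not vanish at `i`,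
so some `T = R + t Q` is invertible. By skew-symmetry `Tᵀ` intertwines `x₂` with `x₁`, so `TᵀT`
commutes with `x₁`, hence so does `P = √(TᵀT)`, and the orthogonal factor `T P⁻¹` of the polar
decomposition of `T` conjugates `x₁` to `x₂`.
-/

open Matrix Polynomial Unitary CFC
open scoped MatrixOrder

namespace Matrix

variable {n : Type*}

theorem isHermitian_I_smul_map_of_transpose_eq_neg {x : Matrix n n ℝ} (hx : xᵀ = -x) :
    (Complex.I • x.map (algebraMap ℝ ℂ)).IsHermitian := by
  ext i j
  have := congrFun (congrFun hx j) i
  simp only [transpose_apply, neg_apply] at this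
  simp [conjTranspose_apply, this]

variable [Fintype n]

theorem map_mul_map_algebraMap {K L : Type*} [CommSemiring K] [Semiring L] [Algebra K L]
    (f : L →ₗ[K] K) (V : Matrix n n L) (x : Matrix n n K) :
    (V * x.map (algebraMap K L)).map f = V.map f * x := by
  ext i j
  simp only [map_apply, mul_apply, map_sum, ← Algebra.commutes, ← Algebra.smul_def, map_smul,
    smul_eq_mul, mul_comm]

theorem map_algebraMap_mul_map {K L : Type*} [CommSemiring K] [Semiring L] [Algebra K L]
    (f : L →ₗ[K] K) (x : Matrix n n K) (V : Matrix n n L) :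
    (x.map (algebraMap K L) * V).map f = x * V.map f := by
  ext i j
  simp [mul_apply, ← Algebra.smul_def]

variable [DecidableEq n]

theorem charpoly_smul_comp_C_mul_X {R : Type*} [CommRing R] (M : Matrix n n R) (c : R) :
    (c • M).charpoly.comp (C c * X) = C c ^ Fintype.card n * M.charpoly := by
  have hmap : (charmatrix (c • M)).map (compRingHom (C c * X)) = C c • charmatrix M := by
    ext i j
    by_cases hij : i = j
    · subst hij; simp [charmatrix_apply_eq, mul_sub]
    · simp [charmatrix_apply_ne _ _ _ hij]
  rw [charpoly, ← coe_compRingHom_apply, RingHom.map_det, RingHom.mapMatrix_apply, hmap,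
    det_smul, charpoly]

theorem charpoly_smul_eq_of_charpoly_eq {K : Type*} [Field K] {A B : Matrix n n K}
    (h : A.charpoly = B.charpoly) (c : K) : (c • A).charpoly = (c • B).charpoly := by
  rcases eq_or_ne c 0 with rfl | hc
  · simp
  have hcomp : ∀ p : K[X], (p.comp (C c * X)).comp (C c⁻¹ * X) = p := fun p => by
    rw [comp_assoc, mul_comp, C_comp, X_comp, ← mul_assoc, ← C_mul, mul_inv_cancel₀ hc, C_1,
      one_mul, comp_X]
  rw [← hcomp (c • A).charpoly, ← hcomp (c • B).charpoly, charpoly_smul_comp_C_mul_X,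
    charpoly_smul_comp_C_mul_X, h]

theorem IsHermitian.exists_mem_unitaryGroup_conj_eq_of_charpoly_eq {𝕜 : Type*} [RCLike 𝕜]
    {A B : Matrix n n 𝕜} (hA : A.IsHermitian) (hB : B.IsHermitian)
    (h : A.charpoly = B.charpoly) : ∃ U ∈ unitaryGroup n 𝕜, U * A * star U = B := by
  refine ⟨_, (hB.eigenvectorUnitary * star hA.eigenvectorUnitary).2, ?_⟩
  have := conjStarAlgAut_mul_apply (S := 𝕜) hB.eigenvectorUnitary (star hA.eigenvectorUnitary) A
  rw [conjStarAlgAut_star_eigenvectorUnitary, (hA.eigenvalues_eq_eigenvalues_iff hB).mpr h,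
    ← hB.spectral_theorem, conjStarAlgAut_apply] at this
  exact this

theorem exists_mem_unitaryGroup_mul_map_eq_of_charpoly_eq {x y : Matrix n n ℝ} (hx : xᵀ = -x)
    (hy : yᵀ = -y) (h : x.charpoly = y.charpoly) :
    ∃ U ∈ unitaryGroup n ℂ, U * x.map (algebraMap ℝ ℂ) = y.map (algebraMap ℝ ℂ) * U := by
  set X := x.map (algebraMap ℝ ℂ)
  set Y := y.map (algebraMap ℝ ℂ)
  have hXY : (Complex.I • X).charpoly = (Complex.I • Y).charpoly :=
    charpoly_smul_eq_of_charpoly_eq (by rw [charpoly_map, charpoly_map, h]) _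
  obtain ⟨U, hU, hUXY⟩ := (isHermitian_I_smul_map_of_transpose_eq_neg hx)
    |>.exists_mem_unitaryGroup_conj_eq_of_charpoly_eq
      (isHermitian_I_smul_map_of_transpose_eq_neg hy) hXY
  have hconj : U * X * star U = Y := smul_right_injective _ Complex.I_ne_zero
    (by simpa only [mul_smul_comm, smul_mul_assoc] using hUXY)
  exact ⟨U, hU, by rw [← hconj, mul_assoc _ (star U), star_mul_self_of_mem hU, mul_one]⟩

theorem exists_det_add_smul_ne_zero {K L : Type*} [CommRing K] [IsDomain K] [Infinite K]
    [CommRing L] [Algebra K L] (R Q : Matrix n n K) (z : L)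
    (h : (R.map (algebraMap K L) + z • Q.map (algebraMap K L)).det ≠ 0) :
    ∃ t : K, (R + t • Q).det ≠ 0 := by
  set M : Matrix n n K[X] := R.map C + (X : K[X]) • Q.map C
  have hz : eval₂ (algebraMap K L) z M.det =
      (R.map (algebraMap K L) + z • Q.map (algebraMap K L)).det := by
    rw [← coe_eval₂RingHom, RingHom.map_det]
    congr 1
    ext i j
    simp [M, mul_comm z]
  have ht : ∀ t : K, M.det.eval t = (R + t • Q).det := fun t => by
    rw [← coe_evalRingHom, RingHom.map_det]
    congr 1
    ext i j
    simp [M, mul_comm t]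
  by_contra! hzero
  have hM : M.det = 0 := Polynomial.funext fun t => by rw [ht, hzero, eval_zero]
  exact h (by rw [← hz, hM, eval₂_zero])

theorem exists_isUnit_mul_eq_of_map_complex {x y : Matrix n n ℝ} {V : Matrix n n ℂ}
    (hV : IsUnit V) (hVx : V * x.map (algebraMap ℝ ℂ) = y.map (algebraMap ℝ ℂ) * V) :
    ∃ T : Matrix n n ℝ, IsUnit T ∧ T * x = y * T := by
  set R := V.map Complex.reLm
  set Q := V.map Complex.imLm
  have hRQ : V = R.map (algebraMap ℝ ℂ) + Complex.I • Q.map (algebraMap ℝ ℂ) := by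
    ext i j
    simp [R, Q, Complex.ext_iff]
  have hR : R * x = y * R := by
    simpa only [map_mul_map_algebraMap, map_algebraMap_mul_map] using
      congrArg (map · Complex.reLm) hVx
  have hQ : Q * x = y * Q := by
    simpa only [map_mul_map_algebraMap, map_algebraMap_mul_map] using
      congrArg (map · Complex.imLm) hVx
  obtain ⟨t, ht⟩ := exists_det_add_smul_ne_zero R Q Complex.I
    (hRQ ▸ ((isUnit_iff_isUnit_det V).mp hV).ne_zero)
  refine ⟨R + t • Q, (isUnit_iff_isUnit_det _).mpr ht.isUnit, ?_⟩
  rw [add_mul, mul_add, smul_mul, Matrix.mul_smul, hR, hQ]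

end Matrix

section Polar

variable {A : Type*} [Ring A] [StarRing A] [PartialOrder A] [StarOrderedRing A] [TopologicalSpace A]
  [Algebra ℝ A] [ContinuousFunctionalCalculus ℝ A IsSelfAdjoint] [NonnegSpectrumClass ℝ A]
  [IsTopologicalRing A] [T2Space A]

theorem exists_mem_unitary_conj_eq_of_isUnit {x y T : A} (hT : IsUnit T)
    (hTx : T * x = y * T) (hTy : star T * y = x * star T) :
    ∃ u ∈ unitary A, u * x * star u = y := by
  obtain ⟨P, hPsa, hPP, hPx⟩ : ∃ P : A, star P = P ∧ P * P = star T * T ∧ Commute P x := by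
    have hxS : Commute (star T * T) x := by
      rw [Commute, SemiconjBy, mul_assoc, hTx, ← mul_assoc, hTy, mul_assoc]
    refine ⟨sqrt (star T * T), (IsSelfAdjoint.of_nonneg (sqrt_nonneg _)).star_eq,
      sqrt_mul_sqrt_self _ (star_mul_self_nonneg T), ?_⟩
    rw [sqrt_eq_cfc]
    exact hxS.cfc_nnreal _
  have hP : IsUnit P := isUnit_mul_self_iff.mp (hPP ▸ hT.star.mul hT)
  set P' := Ring.inverse P
  have hP'P : P' * P = 1 := Ring.inverse_mul_cancel P hP
  have hPP' : P * P' = 1 := Ring.mul_inverse_cancel P hP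
  have hP'sa : star P' = P' := by rw [← Ring.inverse_star, hPsa]
  have hP'x : P' * x = x * P' := by
    calc P' * x = P' * (x * P) * P' := by rw [mul_assoc, mul_assoc, hPP', mul_one]
      _ = x * P' := by rw [← hPx.eq, ← mul_assoc, hP'P, one_mul]
  have hu : T * P' ∈ unitary A := by
    rw [(hT.mul hP.ringInverse).mem_unitary_iff_star_mul_self, star_mul, hP'sa]
    calc P' * star T * (T * P') = P' * (P * P) * P' := by simp only [hPP, mul_assoc]
      _ = 1 := by rw [← mul_assoc, hP'P, one_mul, hPP']
  refine ⟨T * P', hu, ?_⟩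
  have hux : T * P' * x = y * (T * P') := by
    rw [mul_assoc, hP'x, ← mul_assoc, hTx, mul_assoc]
  rw [hux, mul_assoc, mul_star_self_of_mem hu, mul_one]

end Polar

/-- two real skew-symmetric `n×n` matrices with the same characteristic
polynomial are conjugate by an orthogonal matrix. -/
theorem skew_symmetric_orthogonally_conjugate_of_charpoly_eq (n : ℕ)
    (x₁ x₂ : Matrix (Fin n) (Fin n) ℝ)
    (h₁ : x₁ᵀ = -x₁) (h₂ : x₂ᵀ = -x₂)
    (hchar : x₁.charpoly = x₂.charpoly) :
    ∃ g ∈ Matrix.orthogonalGroup (Fin n) ℝ, g * x₁ * g⁻¹ = x₂ := by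
  obtain ⟨U, hU, hUx⟩ := exists_mem_unitaryGroup_mul_map_eq_of_charpoly_eq h₁ h₂ hchar
  obtain ⟨T, hT, hTx⟩ := exists_isUnit_mul_eq_of_map_complex (isUnit_coe (U := ⟨U, hU⟩)) hUx
  have hTy : star T * x₂ = x₁ * star T := by
    have := congrArg transpose hTx
    rw [transpose_mul, transpose_mul, h₁, h₂, mul_neg, neg_mul, neg_inj] at this
    simpa only [star_eq_conjTranspose, conjTranspose_eq_transpose_of_trivial] using this.symm
  obtain ⟨g, hg, hgx⟩ := exists_mem_unitary_conj_eq_of_isUnit hT hTx hTy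
  exact ⟨g, hg, by rwa [inv_eq_left_inv (star_mul_self_of_mem hg)]⟩
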